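/- arXiv:1403.2975 — 7 statements merged into one kernel-verified Lean document; each statement's English description precedes it below -/
import Mathlib

section
/- Let A = [x₀, x₁] and B = [y₀, y₁] be closed real intervals with lengths δ = x₁ − x₀ and Δ = y₁ − y₀. If δΔ < 1, then there exists at most one α ∈ Z[√2] with α ∈ A and α• ∈ B. -/
/-!
Two solutions α, α' give β = α − α' ∈ ℤ[√2] with |β| ≤ δ and |β•| ≤ Δ, so the integer
N(β) = β β• has |N(β)| ≤ δΔ < 1, hence N(β) = 0. Since √2 is irrational, β = 0.
-/

section QuadraticInteger

variable {s : ℝ} {d : ℤ}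

theorem Irrational.eq_zero_of_intCast_add_intCast_mul_eq_zero (hs : Irrational s) {p q : ℤ}
    (h : (p : ℝ) + q * s = 0) : p = 0 ∧ q = 0 := by
  obtain rfl | hq := eq_or_ne q 0
  · simpa using h
  · exact absurd h ((hs.intCast_mul hq).intCast_add p).ne_zero

theorem intCast_add_intCast_mul_mul_sub (hsd : s ^ 2 = d) (p q : ℤ) :
    ((p : ℝ) + q * s) * ((p : ℝ) - q * s) = ((p ^ 2 - d * q ^ 2 : ℤ) : ℝ) := by
  push_cast
  rw [← hsd]
  ring

theorem Irrational.eq_zero_of_abs_mul_abs_conj_lt_one (hs : Irrational s) (hsd : s ^ 2 = d)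
    {p q : ℤ} (h : |(p : ℝ) + q * s| * |(p : ℝ) - q * s| < 1) : p = 0 ∧ q = 0 := by
  have hnorm : p ^ 2 - d * q ^ 2 = 0 := by
    rw [← abs_mul, intCast_add_intCast_mul_mul_sub hsd] at h
    exact Int.abs_lt_one_iff.mp (mod_cast h)
  have hprod : ((p : ℝ) + q * s) * ((p : ℝ) - q * s) = 0 := by
    rw [intCast_add_intCast_mul_mul_sub hsd, hnorm, Int.cast_zero]
  rcases mul_eq_zero.mp hprod with hβ | hβconj
  · exact hs.eq_zero_of_intCast_add_intCast_mul_eq_zero hβ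
  · obtain ⟨hp, hq⟩ := hs.eq_zero_of_intCast_add_intCast_mul_eq_zero (p := p) (q := -q)
      (by push_cast; linarith)
    exact ⟨hp, neg_eq_zero.mp hq⟩

end QuadraticInteger

/-- If the intervals A = [x₀,x₁], B = [y₀,y₁] satisfy (x₁−x₀)(y₁−y₀) < 1, then the
    one-dimensional grid problem has at most one solution α ∈ ℤ[√2]. -/
theorem grid_problem_at_most_one (x₀ x₁ y₀ y₁ : ℝ)
    (h : (x₁ - x₀) * (y₁ - y₀) < 1)
    (a b a' b' : ℤ)
    (h1 : (a : ℝ) + b * Real.sqrt 2 ∈ Set.Icc x₀ x₁)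
    (h2 : (a : ℝ) - b * Real.sqrt 2 ∈ Set.Icc y₀ y₁)
    (h3 : (a' : ℝ) + b' * Real.sqrt 2 ∈ Set.Icc x₀ x₁)
    (h4 : (a' : ℝ) - b' * Real.sqrt 2 ∈ Set.Icc y₀ y₁) :
    (a : ℝ) + b * Real.sqrt 2 = (a' : ℝ) + b' * Real.sqrt 2 := by
  have hβ : |((a - a' : ℤ) : ℝ) + ((b - b' : ℤ) : ℝ) * √2| ≤ x₁ - x₀ := by
    rw [show ((a - a' : ℤ) : ℝ) + ((b - b' : ℤ) : ℝ) * √2 =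
      (a + b * √2) - (a' + b' * √2) by push_cast; ring]
    exact abs_sub_le_of_le_of_le h1.1 h1.2 h3.1 h3.2
  have hβconj : |((a - a' : ℤ) : ℝ) - ((b - b' : ℤ) : ℝ) * √2| ≤ y₁ - y₀ := by
    rw [show ((a - a' : ℤ) : ℝ) - ((b - b' : ℤ) : ℝ) * √2 =
      (a - b * √2) - (a' - b' * √2) by push_cast; ring]
    exact abs_sub_le_of_le_of_le h2.1 h2.2 h4.1 h4.2
  have hnorm := (mul_le_mul hβ hβconj (abs_nonneg _) ((abs_nonneg _).trans hβ)).trans_lt h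
  obtain ⟨hp, hq⟩ := irrational_sqrt_two.eq_zero_of_abs_mul_abs_conj_lt_one (d := 2)
    (by norm_num) hnorm
  rw [sub_eq_zero.mp hp, sub_eq_zero.mp hq]
end

section
/- Let A = [x₀, x₁] and B = [y₀, y₁] be closed real intervals with lengths δ = x₁ − x₀ and Δ = y₁ − y₀. If δΔ ≥ (1 + √2)², then there exists at least one α ∈ Z[√2] with α ∈ A and α• ∈ B. -/
/-!
Multiplication by the unit `ε = 3 + 2√2 = (1 + √2)²`, of norm `1`, maps solutions for `(A, B)`
to solutions for `(εA, ε⁻¹B)`, and it keeps the product `δΔ`. Rescaling by a power of `ε`, we may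
therefore assume `1 ≤ δ ≤ (1 + √2)²`, hence also `1 ≤ Δ`. Then a solution `a + b√2` is found
coordinatewise: by AM-GM `δ + Δ - 2 ≥ 2√2`, so some `2b√2` lies between `x₀ - y₁ + 1` and
`x₁ - y₀ - 1`; this makes `[x₀ - b√2, x₁ - b√2] ∩ [y₀ + b√2, y₁ + b√2]` an interval of length at
least `1`, which contains an integer `a`.
-/

open Real Set Zsqrtd

lemma exists_int_mul_mem_Icc {c u v : ℝ} (hc : 0 < c) (h : u + c ≤ v) :
    ∃ n : ℤ, n * c ∈ Icc u v := by
  refine ⟨⌈u / c⌉, (div_le_iff₀ hc).mp (Int.le_ceil _), ?_⟩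
  have := (lt_div_iff₀ hc).mp (sub_lt_iff_lt_add.mpr (Int.ceil_lt_add_one (u / c)))
  linarith

lemma mul_mem_Icc_of_mem_Icc_inv_mul {c t x y : ℝ} (hc : 0 < c)
    (h : t ∈ Icc (c⁻¹ * x) (c⁻¹ * y)) : c * t ∈ Icc x y :=
  ⟨(inv_mul_le_iff₀ hc).mp h.1, (le_inv_mul_iff₀ hc).mp h.2⟩

lemma exists_zpow_one_le_inv_mul_and_one_le_mul {μ δ Δ : ℝ} (hμ : 1 < μ) (hΔ : 0 ≤ Δ)
    (h : μ ≤ δ * Δ) : ∃ n : ℤ, 1 ≤ (μ ^ n)⁻¹ * δ ∧ 1 ≤ μ ^ n * Δ := by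
  have hδ : 0 < δ := pos_of_mul_pos_left (by linarith) hΔ
  obtain ⟨n, hlo, hhi⟩ := exists_mem_Ico_zpow hδ hμ
  have hc : 0 < μ ^ n := zpow_pos (by linarith) n
  refine ⟨n, (one_le_inv_mul₀ hc).mpr hlo, ?_⟩
  rw [zpow_add_one₀ (by positivity)] at hhi
  nlinarith

lemma map_val_units_zpow {M G₀ F : Type*} [Monoid M] [GroupWithZero G₀] [FunLike F M G₀]
    [MonoidHomClass F M G₀] (f : F) (u : Mˣ) (n : ℤ) : f ↑(u ^ n) = f ↑u ^ n := by
  rw [← MonoidHom.coe_coe f, ← Units.coe_map, map_zpow, Units.val_zpow_eq_zpow_val, Units.coe_map]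

def unitThreeAddTwoSqrtTwo : (ℤ√2)ˣ where
  val := ⟨3, 2⟩
  inv := ⟨3, -2⟩
  val_inv := by decide
  inv_val := by decide

lemma toReal_unitThreeAddTwoSqrtTwo :
    toReal zero_le_two ↑unitThreeAddTwoSqrtTwo = (1 + √2) ^ 2 := by
  simp only [unitThreeAddTwoSqrtTwo, toReal_apply]
  linear_combination -sq_sqrt (zero_le_two : (0 : ℝ) ≤ 2)

lemma toReal_star_unitThreeAddTwoSqrtTwo :
    toReal zero_le_two (star ↑unitThreeAddTwoSqrtTwo) = ((1 + √2) ^ 2)⁻¹ := by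
  refine eq_inv_of_mul_eq_one_left ?_
  simp only [unitThreeAddTwoSqrtTwo, star_mk, toReal_apply]
  push_cast
  linear_combination (-1 - 2 * √2) * sq_sqrt (zero_le_two : (0 : ℝ) ≤ 2)

lemma toReal_unitThreeAddTwoSqrtTwo_zpow (n : ℤ) :
    toReal zero_le_two ↑(unitThreeAddTwoSqrtTwo ^ n) = ((1 + √2) ^ 2) ^ n := by
  rw [map_val_units_zpow, toReal_unitThreeAddTwoSqrtTwo]

lemma toReal_star_unitThreeAddTwoSqrtTwo_zpow (n : ℤ) :
    toReal zero_le_two (star ↑(unitThreeAddTwoSqrtTwo ^ n)) = (((1 + √2) ^ 2) ^ n)⁻¹ := by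
  have := map_val_units_zpow ((toReal zero_le_two).comp (starRingEnd (ℤ√2)))
    unitThreeAddTwoSqrtTwo n
  simp only [RingHom.comp_apply, starRingEnd_apply] at this
  rw [this, toReal_star_unitThreeAddTwoSqrtTwo, inv_zpow]

lemma exists_mem_Icc_of_one_le {x₀ x₁ y₀ y₁ : ℝ} (hδ : 1 ≤ x₁ - x₀) (hΔ : 1 ≤ y₁ - y₀)
    (h : (1 + √2) ^ 2 ≤ (x₁ - x₀) * (y₁ - y₀)) :
    ∃ α : ℤ√2, toReal zero_le_two α ∈ Icc x₀ x₁ ∧ toReal zero_le_two (star α) ∈ Icc y₀ y₁ := by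
  have hs : 0 < √2 := by positivity
  have hsum : 2 * (1 + √2) ≤ (x₁ - x₀) + (y₁ - y₀) := by
    nlinarith [sq_nonneg ((x₁ - x₀) - (y₁ - y₀))]
  obtain ⟨b, hb⟩ := exists_int_mul_mem_Icc (u := x₀ - y₁ + 1) (v := x₁ - y₀ - 1)
    (by positivity : 0 < 2 * √2) (by linarith)
  obtain ⟨hb₀, hb₁⟩ := hb
  have hlen : max (x₀ - b * √2) (y₀ + b * √2) + 1 ≤ min (x₁ - b * √2) (y₁ + b * √2) := by
    rw [max_add]
    exact max_le (le_min (by linarith) (by linarith)) (le_min (by linarith) (by linarith))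
  obtain ⟨a, ha⟩ := exists_int_mul_mem_Icc zero_lt_one hlen
  simp only [mul_one, mem_Icc, max_le_iff, le_min_iff] at ha
  refine ⟨⟨a, b⟩, ?_, ?_⟩ <;> simp only [toReal_apply, star_mk, mem_Icc] <;>
    constructor <;> push_cast <;> linarith

lemma mul_mem_Icc_of_mem_Icc_rescaled {β α : ℤ√2} {c x₀ x₁ y₀ y₁ : ℝ} (hc : 0 < c)
    (hβ : toReal zero_le_two β = c) (hβ' : toReal zero_le_two (star β) = c⁻¹)
    (hα : toReal zero_le_two α ∈ Icc (c⁻¹ * x₀) (c⁻¹ * x₁))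
    (hα' : toReal zero_le_two (star α) ∈ Icc (c * y₀) (c * y₁)) :
    toReal zero_le_two (β * α) ∈ Icc x₀ x₁ ∧
      toReal zero_le_two (star (β * α)) ∈ Icc y₀ y₁ := by
  rw [star_mul', map_mul, map_mul, hβ, hβ']
  refine ⟨mul_mem_Icc_of_mem_Icc_inv_mul hc hα, mul_mem_Icc_of_mem_Icc_inv_mul (inv_pos.2 hc) ?_⟩
  rwa [inv_inv]

theorem grid_problem_at_least_one_general (x₀ x₁ y₀ y₁ : ℝ)
    (hy : y₀ ≤ y₁)
    (h : (1 + Real.sqrt 2) ^ 2 ≤ (x₁ - x₀) * (y₁ - y₀)) :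
    ∃ a b : ℤ, ((a : ℝ) + b * Real.sqrt 2 ∈ Set.Icc x₀ x₁) ∧
      ((a : ℝ) - b * Real.sqrt 2 ∈ Set.Icc y₀ y₁) := by
  have hμ : 1 < (1 + √2) ^ 2 := one_lt_pow₀ (by simp) two_ne_zero
  obtain ⟨n, hδ, hΔ⟩ := exists_zpow_one_le_inv_mul_and_one_le_mul hμ (sub_nonneg.2 hy) h
  set c := ((1 + √2) ^ 2) ^ n
  have hc : 0 < c := zpow_pos (by linarith) n
  obtain ⟨α, hα, hα'⟩ := exists_mem_Icc_of_one_le (x₀ := c⁻¹ * x₀) (x₁ := c⁻¹ * x₁)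
    (y₀ := c * y₀) (y₁ := c * y₁) (by rwa [← mul_sub]) (by rwa [← mul_sub])
    (by rwa [← mul_sub, ← mul_sub, mul_mul_mul_comm, inv_mul_cancel₀ hc.ne', one_mul])
  obtain ⟨hA, hB⟩ := mul_mem_Icc_of_mem_Icc_rescaled hc
    (toReal_unitThreeAddTwoSqrtTwo_zpow n) (toReal_star_unitThreeAddTwoSqrtTwo_zpow n) hα hα'
  set β := ↑(unitThreeAddTwoSqrtTwo ^ n) * α
  refine ⟨β.re, β.im, ?_, ?_⟩
  · simpa only [toReal_apply, Int.cast_ofNat] using hA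
  · simpa only [toReal_apply, re_star, im_star, Int.cast_ofNat, Int.cast_neg, neg_mul,
      ← sub_eq_add_neg] using hB

/-- If the intervals A = [x₀,x₁], B = [y₀,y₁] satisfy (x₁−x₀)(y₁−y₀) ≥ (1+√2)²,
    then the one-dimensional grid problem has at least one solution α ∈ ℤ[√2]. -/
theorem grid_problem_at_least_one (x₀ x₁ y₀ y₁ : ℝ)
    (hx : x₀ ≤ x₁) (hy : y₀ ≤ y₁)
    (h : (1 + Real.sqrt 2) ^ 2 ≤ (x₁ - x₀) * (y₁ - y₀)) :
    ∃ a b : ℤ, ((a : ℝ) + b * Real.sqrt 2 ∈ Set.Icc x₀ x₁) ∧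
      ((a : ℝ) - b * Real.sqrt 2 ∈ Set.Icc y₀ y₁) :=
  grid_problem_at_least_one_general x₀ x₁ y₀ y₁ hy h
end

section
/- A real linear operator G : ℝ² → ℝ², identified with a 2×2 real matrix, satisfies G(Z[ω]) ⊆ Z[ω] (where Z[ω] is viewed as a subset of ℝ² via the identification of ℂ with ℝ²) if and only if G has entries of the form G = [[a + a'/√2, b + b'/√2], [c + c'/√2, d + d'/√2]] with integers a, b, c, d, a', b', c', d' satisfying a + b + c + d ≡ 0 (mod 2) and a' ≡ b' ≡ c' ≡ d' (mod 2). -/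
/-- ℤ[ω], identified with a subset of ℝ² (as pairs of coordinates). -/
def gridPts : Set (Fin 2 → ℝ) :=
  {v | ∃ x₁ x₂ y₁ y₂ : ℤ, v 0 = x₁ + x₂ / Real.sqrt 2 ∧
        v 1 = y₁ + y₂ / Real.sqrt 2 ∧ x₂ % 2 = y₂ % 2}

/-!
The integer coordinates of a real number `x₁ + x₂ / √2` are unique because `√2` is irrational.
Hence a grid operator is pinned down by the images of `1`, `i` and `ω = (1 + i) / √2`: the first
two give the columns, and since `(p + q / √2) / √2 = q / 2 + p / √2`, the image of `ω` lies in
`ℤ[ω]` exactly when both `a' + b'` and `c' + d'` are even and `a + b ≡ c + d (mod 2)`.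
Conversely, for such a matrix, expanding `G v` shows that these parities are exactly what keeps
the coordinates of `G v` integral and of matching parity.
-/

open Real

lemma int_add_int_div_sqrt_two_inj {x₁ x₂ y₁ y₂ : ℤ}
    (h : (x₁ : ℝ) + x₂ / √2 = y₁ + y₂ / √2) : x₁ = y₁ ∧ x₂ = y₂ := by
  have hsqrt : √2 ≠ 0 := by positivity
  have hrat : ((x₁ - y₁ : ℤ) : ℝ) * √2 = (y₂ - x₂ : ℤ) := by
    field_simp at h
    push_cast
    linear_combination h
  have hx₁ : x₁ = y₁ := by
    by_contra hne
    exact (irrational_sqrt_two.intCast_mul (sub_ne_zero.mpr hne)).ne_int _ hrat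
  subst hx₁
  simp only [sub_self, Int.cast_zero, zero_mul, eq_comm, Int.cast_eq_zero] at hrat
  exact ⟨rfl, by omega⟩

lemma eq_of_mul_one_div_sqrt_two_add_mul_one_div_sqrt_two {a a' b b' u₁ u₂ : ℤ}
    (h : ((a : ℝ) + a' / √2) * (1 / √2) + ((b : ℝ) + b' / √2) * (1 / √2) = u₁ + u₂ / √2) :
    a' + b' = 2 * u₁ ∧ a + b = u₂ := by
  have hsqrt : √2 ≠ 0 := by positivity
  have hsq : √2 * √2 = 2 := mul_self_sqrt zero_le_two
  have h' : ((a' + b' : ℤ) : ℝ) + (2 * (a + b) : ℤ) / √2 = (2 * u₁ : ℤ) + (2 * u₂ : ℤ) / √2 := by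
    field_simp at h ⊢
    push_cast
    linear_combination √2 * h + (√2 * u₁ + u₂ - a - b) * hsq
  obtain ⟨h₁, h₂⟩ := int_add_int_div_sqrt_two_inj h'
  exact ⟨h₁, by omega⟩

lemma two_dvd_mul_add_mul {a b x y : ℤ} (hab : a ≡ b [ZMOD 2]) (hxy : x ≡ y [ZMOD 2]) :
    2 ∣ a * x + b * y := by
  replace hab := (ZMod.intCast_eq_intCast_iff _ _ 2).mpr hab
  replace hxy := (ZMod.intCast_eq_intCast_iff _ _ 2).mpr hxy
  have h2 : (2 : ZMod 2) = 0 := rfl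
  apply (ZMod.intCast_zmod_eq_zero_iff_dvd _ 2).mp
  push_cast
  linear_combination x * hab + b * hxy + b * y * h2

lemma mul_add_mul_add_mul_add_mul_modEq_two {a b c d a' b' c' d' x₁ x₂ y₁ y₂ : ℤ}
    (hsum : a + b + c + d ≡ 0 [ZMOD 2]) (hac : a' ≡ c' [ZMOD 2]) (hbd : b' ≡ d' [ZMOD 2])
    (hxy : x₂ ≡ y₂ [ZMOD 2]) :
    a * x₂ + b * y₂ + a' * x₁ + b' * y₁ ≡ c * x₂ + d * y₂ + c' * x₁ + d' * y₁ [ZMOD 2] := by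
  replace hsum := (ZMod.intCast_eq_intCast_iff _ _ 2).mpr hsum
  replace hac := (ZMod.intCast_eq_intCast_iff _ _ 2).mpr hac
  replace hbd := (ZMod.intCast_eq_intCast_iff _ _ 2).mpr hbd
  replace hxy := (ZMod.intCast_eq_intCast_iff _ _ 2).mpr hxy
  have h2 : (2 : ZMod 2) = 0 := rfl
  apply (ZMod.intCast_eq_intCast_iff _ _ 2).mp
  push_cast at hsum ⊢
  linear_combination x₁ * hac + y₁ * hbd - (b - d) * hxy + x₂ * hsum - x₂ * (c + d) * h2

lemma int_add_int_div_sqrt_two_mul_add_mul {a a' b b' x₁ x₂ y₁ y₂ k : ℤ}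
    (hk : a' * x₂ + b' * y₂ = 2 * k) :
    ((a : ℝ) + a' / √2) * (x₁ + x₂ / √2) + ((b : ℝ) + b' / √2) * (y₁ + y₂ / √2) =
      ((a * x₁ + b * y₁ + k : ℤ) : ℝ) + ((a * x₂ + b * y₂ + a' * x₁ + b' * y₁ : ℤ) : ℝ) / √2 := by
  have hsqrt : √2 ≠ 0 := by positivity
  have hsq : √2 * √2 = 2 := mul_self_sqrt zero_le_two
  have hk' : (a' * x₂ + b' * y₂ : ℝ) = 2 * k := by exact_mod_cast hk
  field_simp
  push_cast
  linear_combination hk' - k * hsq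

/-- Characterization of grid operators: G maps ℤ[ω] into ℤ[ω] iff its entries have the
    stated form with the stated parity conditions. -/
theorem grid_operator_characterization (G : Matrix (Fin 2) (Fin 2) ℝ) :
    (∀ v ∈ gridPts, G.mulVec v ∈ gridPts) ↔
    (∃ a b c d a' b' c' d' : ℤ,
      G 0 0 = a + a' / Real.sqrt 2 ∧ G 0 1 = b + b' / Real.sqrt 2 ∧
      G 1 0 = c + c' / Real.sqrt 2 ∧ G 1 1 = d + d' / Real.sqrt 2 ∧
      (a + b + c + d) % 2 = 0 ∧
      a' % 2 = b' % 2 ∧ b' % 2 = c' % 2 ∧ c' % 2 = d' % 2) := by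
  have hmulVec (v : Fin 2 → ℝ) (i : Fin 2) : G.mulVec v i = G i 0 * v 0 + G i 1 * v 1 := by
    simp only [Matrix.mulVec, dotProduct, Fin.sum_univ_two]
  constructor
  · intro hG
    obtain ⟨a, a', c, c', hA, hC, hac⟩ := hG ![1, 0] ⟨1, 0, 0, 0, by simp, by simp, rfl⟩
    obtain ⟨b, b', d, d', hB, hD, hbd⟩ := hG ![0, 1] ⟨0, 0, 1, 0, by simp, by simp, rfl⟩
    obtain ⟨u₁, u₂, w₁, w₂, hu, hw, huw⟩ :=
      hG ![1 / √2, 1 / √2] ⟨0, 1, 0, 1, by simp, by simp, rfl⟩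
    simp only [hmulVec, Matrix.cons_val_zero, Matrix.cons_val_one, mul_one, mul_zero,
      add_zero, zero_add] at hA hB hC hD hu hw
    rw [hA, hB] at hu
    rw [hC, hD] at hw
    have hω₀ := eq_of_mul_one_div_sqrt_two_add_mul_one_div_sqrt_two hu
    have hω₁ := eq_of_mul_one_div_sqrt_two_add_mul_one_div_sqrt_two hw
    exact ⟨a, b, c, d, a', b', c', d', hA, hB, hC, hD, by omega, by omega, by omega, by omega⟩
  · rintro ⟨a, b, c, d, a', b', c', d', hA, hB, hC, hD, hsum, hab, hbc, hcd⟩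
      v ⟨x₁, x₂, y₁, y₂, hv₀, hv₁, hxy⟩
    obtain ⟨k, hk⟩ := two_dvd_mul_add_mul hab hxy
    obtain ⟨m, hm⟩ := two_dvd_mul_add_mul hcd hxy
    refine ⟨a * x₁ + b * y₁ + k, a * x₂ + b * y₂ + a' * x₁ + b' * y₁,
      c * x₁ + d * y₁ + m, c * x₂ + d * y₂ + c' * x₁ + d' * y₁, ?_, ?_,
      mul_add_mul_add_mul_add_mul_modEq_two hsum (hab.trans hbc) (hbc.trans hcd) hxy⟩
    · rw [hmulVec, hA, hB, hv₀, hv₁]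
      exact int_add_int_div_sqrt_two_mul_add_mul hk
    · rw [hmulVec, hC, hD, hv₀, hv₁]
      exact int_add_int_div_sqrt_two_mul_add_mul hm
end

section
/- Every element ξ ∈ Z[√2] with ξ ∼ ξ• (i.e., ξ and ξ• are associates) satisfies either ξ ∼ n or ξ ∼ n√2 for some integer n ∈ ℤ. -/
/-!
If `ξ ≠ 0` and `ξ u = ξ•` for a unit `u`, taking norms gives `N(u) = 1`. By Pell theory every unit
of norm one is `±(3 + 2√2)^n = ±w²` with `w = (1 + √2)^n`. Then `η = w ξ` satisfies
`η• = w• (±w² ξ) = ±N(w) η`, so `η = ±η•`, which forces `η ∈ ℤ` or `η ∈ ℤ·√2`; and `ξ ∼ η`.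
-/

/-- `Unitary.toUnits` retyped, so that `map_zpow` applies to powers taken in `Pell.Solution₁ d`. -/
def Pell.Solution₁.toUnits {d : ℤ} : Pell.Solution₁ d →* (ℤ√d)ˣ := Unitary.toUnits

namespace Zsqrtd

variable {d : ℤ}

theorem eq_re_of_star_eq_self {η : ℤ√d} (h : star η = η) : η = η.re := by
  have him : η.im = 0 := by
    have := congrArg im h
    rw [im_star] at this
    omega
  ext <;> simp [him]

theorem eq_im_mul_sqrtd_of_star_eq_neg {η : ℤ√d} (h : star η = -η) :
    η = (η.im : ℤ√d) * sqrtd := by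
  have hre : η.re = 0 := by
    have := congrArg re h
    rw [re_star, re_neg] at this
    omega
  ext <;> simp [hre]

theorem norm_eq_one_or_neg_one_of_isUnit {w : ℤ√d} (hw : IsUnit w) :
    w.norm = 1 ∨ w.norm = -1 :=
  Int.isUnit_iff.mp ((isUnit_iff_norm_isUnit w).mp hw)

theorem norm_eq_one_of_mul_eq_star (hd : ¬IsSquare d) {ξ u : ℤ√d} (hξ : ξ ≠ 0)
    (h : ξ * u = star ξ) : u.norm = 1 := by
  have hξ' : ξ.norm ≠ 0 := (norm_eq_zero (fun n hn => hd ⟨n, hn⟩) ξ).not.mpr hξ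
  apply mul_left_cancel₀ hξ'
  rw [← norm_mul, h, norm_conj, mul_one]

theorem star_eq_or_eq_neg_of_star_eq_sq_mul {ξ w : ℤ√d} (hw : IsUnit w)
    (h : star ξ = w ^ 2 * ξ ∨ star ξ = -(w ^ 2 * ξ)) :
    star (w * ξ) = w * ξ ∨ star (w * ξ) = -(w * ξ) := by
  have hN := norm_eq_mul_conj w
  rw [star_mul, mul_comm]
  rcases norm_eq_one_or_neg_one_of_isUnit hw with hw1 | hw1 <;> rw [hw1] at hN <;>
    rcases h with h | h <;> rw [h]
  · left; linear_combination (-(w * ξ)) * hN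
  · right; linear_combination (w * ξ) * hN
  · right; linear_combination (-(w * ξ)) * hN
  · left; linear_combination (w * ξ) * hN

theorem associated_int_or_int_mul_sqrtd_of_star_eq_sq_mul {ξ w : ℤ√d} (hw : IsUnit w)
    (h : star ξ = w ^ 2 * ξ ∨ star ξ = -(w ^ 2 * ξ)) :
    (∃ n : ℤ, Associated ξ (n : ℤ√d)) ∨ (∃ n : ℤ, Associated ξ ((n : ℤ√d) * sqrtd)) := by
  obtain ⟨w, rfl⟩ := hw
  have hassoc : Associated ξ (w * ξ) := ⟨w, mul_comm _ _⟩
  rcases star_eq_or_eq_neg_of_star_eq_sq_mul w.isUnit h with hη | hη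
  · exact Or.inl ⟨_, eq_re_of_star_eq_self hη ▸ hassoc⟩
  · exact Or.inr ⟨_, eq_im_mul_sqrtd_of_star_eq_neg hη ▸ hassoc⟩

def threeAddTwoSqrtTwo : Pell.Solution₁ 2 := Pell.Solution₁.mk 3 2 (by norm_num)

def oneAddSqrtTwo : (ℤ√2)ˣ where
  val := ⟨1, 1⟩
  inv := ⟨-1, 1⟩
  val_inv := by ext <;> simp
  inv_val := by ext <;> simp

theorem isFundamental_threeAddTwoSqrtTwo : Pell.IsFundamental threeAddTwoSqrtTwo := by
  refine ⟨by simp [threeAddTwoSqrtTwo], by simp [threeAddTwoSqrtTwo], fun {b} hb => ?_⟩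
  rw [threeAddTwoSqrtTwo, Pell.Solution₁.x_mk]
  by_contra! hb3
  have hb2 : b.x = 2 := by omega
  have hprop := b.prop
  rw [hb2] at hprop
  generalize b.y ^ 2 = t at hprop
  omega

theorem toUnits_threeAddTwoSqrtTwo : threeAddTwoSqrtTwo.toUnits = oneAddSqrtTwo ^ 2 :=
  Units.ext (by ext <;> rfl)

theorem exists_isUnit_sq_of_norm_eq_one {u : ℤ√2} (hu : u.norm = 1) :
    ∃ w : ℤ√2, IsUnit w ∧ (u = w ^ 2 ∨ u = -w ^ 2) := by
  obtain ⟨n, hn⟩ := isFundamental_threeAddTwoSqrtTwo.eq_zpow_or_neg_zpow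
    ⟨u, norm_eq_one_iff_mem_unitary.mp hu⟩
  have hsq : ((threeAddTwoSqrtTwo ^ n).toUnits : ℤ√2) =
      ((oneAddSqrtTwo ^ n : (ℤ√2)ˣ) : ℤ√2) ^ 2 := by
    rw [map_zpow, toUnits_threeAddTwoSqrtTwo, ← zpow_natCast, ← zpow_mul, mul_comm, zpow_mul,
      zpow_natCast, Units.val_pow_eq_pow_val]
  refine ⟨_, (oneAddSqrtTwo ^ n).isUnit, ?_⟩
  rw [← hsq]
  rcases hn with hn | hn
  · exact Or.inl (congrArg Subtype.val hn)
  · exact Or.inr (congrArg Subtype.val hn)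

end Zsqrtd

/-- If ξ ∈ ℤ[√2] is associate to its conjugate ξ•, then ξ ∼ n or ξ ∼ n√2 for some n ∈ ℤ. -/
theorem associated_conj_classification (ξ : ℤ√2) (h : Associated ξ (star ξ)) :
    (∃ n : ℤ, Associated ξ (n : ℤ√2)) ∨
    (∃ n : ℤ, Associated ξ ((n : ℤ√2) * Zsqrtd.sqrtd)) := by
  rcases eq_or_ne ξ 0 with rfl | hξ
  · exact Or.inl ⟨0, by rw [Int.cast_zero]⟩
  obtain ⟨u, hu⟩ := h
  have hnorm : (u : ℤ√2).norm = 1 :=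
    Zsqrtd.norm_eq_one_of_mul_eq_star Zsqrtd.isFundamental_threeAddTwoSqrtTwo.d_nonsquare hξ hu
  obtain ⟨w, hw, hsq⟩ := Zsqrtd.exists_isUnit_sq_of_norm_eq_one hnorm
  refine Zsqrtd.associated_int_or_int_mul_sqrtd_of_star_eq_sq_mul hw ?_
  rw [← hu]
  rcases hsq with hsq | hsq <;> rw [hsq]
  · exact Or.inl (mul_comm _ _)
  · exact Or.inr (by ring)
end

section
/- A unit u of the ring Z[√2] is doubly positive (i.e., u ≥ 0 and u• ≥ 0 as real numbers) if and only if u is a square in Z[√2]. -/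
/-!
A doubly positive unit `u` has norm `u * u• ≥ 0`, hence norm `1`, so it is a solution of Pell's
equation `x² - 2y² = 1` and therefore `±(3 + 2√2)ⁿ` for some `n : ℤ`. Since
`3 + 2√2 = (1 + √2)²` lifts to a square in the unit group, every `(3 + 2√2)ⁿ` is a square, and the
sign `-` is excluded because `-w²` has negative real image. Conversely, a square has nonnegative
image under both real embeddings `a ↦ a` and `a ↦ a•`.
-/

open Zsqrtd Pell

theorem Unitary.isSquare_coe_zpow {R : Type*} [CommMonoid R] [StarMul R] {f : unitary R}
    (hf : IsSquare (f : R)) (n : ℤ) : IsSquare ((f ^ n : unitary R) : R) := by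
  obtain ⟨r, hr⟩ := hf
  have hr_unit : IsUnit r := isUnit_of_mul_isUnit_left (hr ▸ Unitary.isUnit_coe)
  have hf_units : IsSquare (Unitary.toUnits f) := ⟨hr_unit.unit, Units.ext hr⟩
  rw [show ((f ^ n : unitary R) : R) = Units.coeHom R (Unitary.toUnits f ^ n) from
    congrArg Units.val (map_zpow Unitary.toUnits f n)]
  exact (hf_units.zpow n).map _

namespace Zsqrtd

variable {d : ℤ}

theorem toReal_star (h : 0 ≤ d) (a : ℤ√d) : toReal h (star a) = a.re - a.im * √d := by
  simp [toReal_apply, sub_eq_add_neg]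

theorem norm_eq_toReal_mul_toReal_star (h : 0 ≤ d) (a : ℤ√d) :
    (a.norm : ℝ) = toReal h a * toReal h (star a) := by
  rw [← map_mul, ← norm_eq_mul_conj, map_intCast]

theorem norm_eq_one_of_isUnit_of_toReal_nonneg (h : 0 ≤ d) {u : ℤ√d} (hu : IsUnit u)
    (h₁ : 0 ≤ toReal h u) (h₂ : 0 ≤ toReal h (star u)) : u.norm = 1 := by
  rcases Int.isUnit_iff.mp ((isUnit_iff_norm_isUnit u).mp hu) with hn | hn
  · exact hn
  · have hprod := norm_eq_toReal_mul_toReal_star h u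
    rw [hn, Int.cast_neg, Int.cast_one] at hprod
    nlinarith [mul_nonneg h₁ h₂]

theorem isSquare_of_norm_eq_one_of_toReal_nonneg {f : Solution₁ d} (hf : IsFundamental f)
    (hf_sq : IsSquare (f : ℤ√d)) (h : 0 ≤ d) {u : ℤ√d} (hu : u.norm = 1)
    (hu_nonneg : 0 ≤ toReal h u) : IsSquare u := by
  obtain ⟨n, hn | hn⟩ := hf.eq_zpow_or_neg_zpow ⟨u, norm_eq_one_iff_mem_unitary.mp hu⟩
  · rw [show u = ((f ^ n : Solution₁ d) : ℤ√d) from congrArg Subtype.val hn]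
    exact Unitary.isSquare_coe_zpow hf_sq n
  · obtain ⟨r, hr⟩ := Unitary.isSquare_coe_zpow hf_sq n
    have hu_eq : u = -(r * r) := by rw [← hr]; exact congrArg Subtype.val hn
    have hu_zero : toReal h u = 0 := by
      rw [hu_eq, map_neg, map_mul] at hu_nonneg ⊢
      nlinarith [mul_self_nonneg (toReal h r)]
    have hprod := norm_eq_toReal_mul_toReal_star h u
    rw [hu, hu_zero, zero_mul] at hprod
    norm_num at hprod

end Zsqrtd

theorem Pell.isFundamental_mk_three_two :
    IsFundamental (Solution₁.mk 3 2 (by norm_num) : Solution₁ 2) := by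
  refine ⟨by simp, by simp, fun {b} hb => ?_⟩
  rw [Solution₁.x_mk]
  by_contra! hlt
  have hb_pell := b.prop
  rw [show b.x = 2 by omega] at hb_pell
  omega

/-- A unit u of ℤ[√2] is doubly positive (u ≥ 0 and u• ≥ 0 as real numbers) iff u is a
    square in ℤ[√2]. -/
theorem unit_doubly_positive_iff_square (u : ℤ√2) (hu : IsUnit u) :
    ((0 ≤ (u.re : ℝ) + u.im * Real.sqrt 2 ∧ 0 ≤ (u.re : ℝ) - u.im * Real.sqrt 2) ↔
      ∃ v : ℤ√2, u = v * v) := by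
  have h2 : (0 : ℤ) ≤ 2 := by norm_num
  have hf_sq : IsSquare ((Solution₁.mk 3 2 (by norm_num) : Solution₁ 2) : ℤ√2) :=
    ⟨⟨1, 1⟩, by ext <;> simp⟩
  have e₁ := toReal_apply h2 u
  have e₂ := toReal_star h2 u
  push_cast at e₁ e₂
  rw [← e₁, ← e₂]
  constructor
  · rintro ⟨h₁, h₂⟩
    exact isSquare_of_norm_eq_one_of_toReal_nonneg isFundamental_mk_three_two hf_sq h2
      (norm_eq_one_of_isUnit_of_toReal_nonneg h2 hu h₁ h₂) h₁
  · intro (hsq : IsSquare u)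
    exact ⟨(hsq.map (toReal h2)).nonneg, ((hsq.map (starRingEnd _)).map (toReal h2)).nonneg⟩
end

section
/- If W is a unitary 2×2 complex matrix with det W = 1 and tr W ≥ 0 (the trace is real since det W = 1), then for every unit complex scalar λ, ‖I − W‖ ≤ ‖I − λW‖, where ‖·‖ denotes the operator norm. -/
/-! For `W ∈ SU(2)` the adjugate is the inverse, so `W⋆ = adj W` and `W⋆ + W = (tr W) • 1`; in
particular `tr W` is real. Hence `‖(1 - W) x‖² = 2‖x‖² - 2 Re ⟪x, W x⟫ = (2 - tr W) ‖x‖²` for every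
`x`, i.e. `‖1 - W‖ ≤ √(2 - tr W)`. On the other side `λW` is unitary, so summing
`‖(1 - λW) eᵢ‖² = 2 - 2 Re (λ Wᵢᵢ)` over the standard basis gives
`2 ‖1 - λW‖² ≥ 4 - 2 Re (λ tr W) ≥ 4 - 2 tr W`, because `tr W ≥ 0` and `Re λ ≤ 1`. -/

open scoped InnerProductSpace

namespace Matrix

variable {α n : Type*} [Fintype n] [DecidableEq n] [CommRing α]

theorem adjugate_add_self_fin_two (A : Matrix (Fin 2) (Fin 2) α) :
    A.adjugate + A = A.trace • 1 := by
  ext i j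
  fin_cases i <;> fin_cases j <;> simp [adjugate_fin_two, trace_fin_two, add_comm]

variable [StarRing α]

theorem star_eq_adjugate_of_mem_specialUnitaryGroup {W : Matrix n n α}
    (hW : W ∈ specialUnitaryGroup n α) : star W = W.adjugate := by
  obtain ⟨hU, hdet⟩ := mem_specialUnitaryGroup_iff.mp hW
  calc star W = star W * (W * W.adjugate) := by rw [mul_adjugate, hdet, one_smul, mul_one]
    _ = W.adjugate := by rw [← mul_assoc, Unitary.star_mul_self_of_mem hU, one_mul]

theorem star_add_self_of_mem_specialUnitaryGroup_fin_two {W : Matrix (Fin 2) (Fin 2) α}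
    (hW : W ∈ specialUnitaryGroup (Fin 2) α) : star W + W = W.trace • 1 := by
  rw [star_eq_adjugate_of_mem_specialUnitaryGroup hW, adjugate_add_self_fin_two]

theorem star_trace_of_mem_specialUnitaryGroup_fin_two {W : Matrix (Fin 2) (Fin 2) α}
    (hW : W ∈ specialUnitaryGroup (Fin 2) α) : star W.trace = W.trace := by
  have h := congrArg trace (star_add_self_of_mem_specialUnitaryGroup_fin_two hW)
  rw [trace_add, trace_smul, trace_one, star_eq_conjTranspose, trace_conjTranspose,
    Fintype.card_fin, Nat.cast_ofNat, smul_eq_mul] at h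
  linear_combination h

end Matrix

namespace ContinuousLinearMap

open RCLike

section Unitary

variable {𝕜 E : Type*} [RCLike 𝕜] [NormedAddCommGroup E] [InnerProductSpace 𝕜 E] [CompleteSpace E]
  {u : E →L[𝕜] E}

theorem norm_one_sub_apply_sq_of_mem_unitary (hu : u ∈ unitary (E →L[𝕜] E)) (x : E) :
    ‖(1 - u) x‖ ^ 2 = 2 * ‖x‖ ^ 2 - 2 * re ⟪x, u x⟫_𝕜 := by
  rw [sub_apply, one_apply_eq_self, norm_sub_sq (𝕜 := 𝕜), u.norm_map_of_mem_unitary hu]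
  ring

theorem two_mul_re_inner_apply_of_star_add_self {t : 𝕜} (h : star u + u = t • 1) (x : E) :
    2 * re ⟪x, u x⟫_𝕜 = re t * ‖x‖ ^ 2 := by
  have hx := congrArg (fun T : E →L[𝕜] E ↦ re ⟪x, T x⟫_𝕜) h
  simp only [add_apply, star_eq_adjoint, adjoint_inner_right, inner_add_right, smul_apply,
    one_apply_eq_self, inner_smul_right, inner_self_eq_norm_sq_to_K, map_add] at hx
  rw [← inner_conj_symm, conj_re, ← ofReal_pow, re_mul_ofReal] at hx
  linarith

theorem norm_one_sub_le_sqrt_of_star_add_self {t : 𝕜} (hu : u ∈ unitary (E →L[𝕜] E))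
    (h : star u + u = t • 1) : ‖1 - u‖ ≤ √(2 - re t) := by
  refine opNorm_le_bound _ (Real.sqrt_nonneg _) fun x ↦ le_of_eq ?_
  have hsq : ‖(1 - u) x‖ ^ 2 = (2 - re t) * ‖x‖ ^ 2 := by
    rw [norm_one_sub_apply_sq_of_mem_unitary hu, two_mul_re_inner_apply_of_star_add_self h]
    ring
  rw [← Real.sqrt_sq (norm_nonneg ((1 - u) x)), hsq, Real.sqrt_mul' _ (sq_nonneg _),
    Real.sqrt_sq (norm_nonneg x)]

end Unitary

theorem sum_norm_apply_single_sq_le {𝕜 F n : Type*} [RCLike 𝕜] [Fintype n] [DecidableEq n]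
    [NormedAddCommGroup F] [NormedSpace 𝕜 F] (A : EuclideanSpace 𝕜 n →L[𝕜] F) :
    ∑ i, ‖A (EuclideanSpace.single i 1)‖ ^ 2 ≤ Fintype.card n * ‖A‖ ^ 2 := by
  calc ∑ i, ‖A (EuclideanSpace.single i 1)‖ ^ 2 ≤ ∑ _i : n, ‖A‖ ^ 2 := by
        gcongr with i
        simpa using A.le_opNorm (EuclideanSpace.single i 1)
    _ = Fintype.card n * ‖A‖ ^ 2 := by simp

end ContinuousLinearMap

namespace Matrix

open RCLike

variable {𝕜 n : Type*} [RCLike 𝕜] [Fintype n] [DecidableEq n]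

theorem inner_single_toEuclideanCLM_single (A : Matrix n n 𝕜) (i : n) :
    ⟪EuclideanSpace.single i 1,
      toEuclideanCLM (n := n) (𝕜 := 𝕜) A (EuclideanSpace.single i 1)⟫_𝕜 = A i i := by
  simp [EuclideanSpace.inner_single_left]

theorem sum_norm_toEuclideanCLM_one_sub_single_sq {W : Matrix n n 𝕜}
    (hW : W ∈ unitaryGroup n 𝕜) :
    ∑ i, ‖toEuclideanCLM (n := n) (𝕜 := 𝕜) (1 - W) (EuclideanSpace.single i 1)‖ ^ 2 =
      2 * Fintype.card n - 2 * re W.trace := by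
  have hU := Unitary.map_mem (toEuclideanCLM (n := n) (𝕜 := 𝕜)) hW
  calc _ = ∑ i, (2 - 2 * re (W i i)) := Finset.sum_congr rfl fun i _ ↦ by
        rw [map_sub, map_one, ContinuousLinearMap.norm_one_sub_apply_sq_of_mem_unitary hU,
          inner_single_toEuclideanCLM_single, PiLp.norm_single, norm_one, one_pow, mul_one]
    _ = 2 * Fintype.card n - 2 * re W.trace := by
      simp [trace, Finset.sum_sub_distrib, Finset.mul_sum, mul_comm]

end Matrix

/-- If W is a 2×2 unitary with det W = 1 and tr W ≥ 0 (the trace is real in this case),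
    then ‖I − W‖ ≤ ‖I − λW‖ for every unit scalar λ, in the operator norm. -/
theorem norm_one_sub_le_of_unit_scalar (W : Matrix (Fin 2) (Fin 2) ℂ)
    (hW : W ∈ Matrix.unitaryGroup (Fin 2) ℂ)
    (hdet : W.det = 1) (htr : 0 ≤ (Matrix.trace W).re)
    (lam : ℂ) (hlam : ‖lam‖ = 1) :
    ‖Matrix.toEuclideanCLM (n := Fin 2) (𝕜 := ℂ) (1 - W)‖ ≤
      ‖Matrix.toEuclideanCLM (n := Fin 2) (𝕜 := ℂ) (1 - lam • W)‖ := by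
  set Φ := Matrix.toEuclideanCLM (n := Fin 2) (𝕜 := ℂ)
  have hSU : W ∈ Matrix.specialUnitaryGroup (Fin 2) ℂ :=
    Matrix.mem_specialUnitaryGroup_iff.mpr ⟨hW, hdet⟩
  have hstar : star (Φ W) + Φ W = W.trace • 1 := by
    rw [← map_star, ← map_add, Matrix.star_add_self_of_mem_specialUnitaryGroup_fin_two hSU,
      map_smul, map_one]
  have hreal : W.trace.im = 0 :=
    Complex.conj_eq_iff_im.mp (Matrix.star_trace_of_mem_specialUnitaryGroup_fin_two hSU)
  have hrot : (lam * W.trace).re ≤ W.trace.re := by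
    rw [Complex.mul_re, hreal, mul_zero, sub_zero]
    exact mul_le_of_le_one_left htr (hlam ▸ Complex.re_le_norm lam)
  have hlamW : lam • W ∈ Matrix.unitaryGroup (Fin 2) ℂ := by
    refine Unitary.smul_mem_of_mem (Unitary.mem_iff_star_mul_self.mpr ?_) hW
    rw [Complex.star_def, Complex.conj_mul', hlam, Complex.ofReal_one, one_pow]
  have hfrob := ContinuousLinearMap.sum_norm_apply_single_sq_le (Φ (1 - lam • W))
  rw [Matrix.sum_norm_toEuclideanCLM_one_sub_single_sq hlamW, Matrix.trace_smul] at hfrob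
  simp only [Fintype.card_fin, Nat.cast_ofNat, RCLike.re_to_complex, smul_eq_mul] at hfrob
  calc ‖Φ (1 - W)‖ ≤ √(2 - W.trace.re) := by
        rw [map_sub, map_one]
        exact ContinuousLinearMap.norm_one_sub_le_sqrt_of_star_add_self (Unitary.map_mem Φ hW) hstar
    _ ≤ ‖Φ (1 - lam • W)‖ := Real.sqrt_le_iff.mpr ⟨norm_nonneg _, by linarith⟩
end

section
/- For every fixed constant b > 0 there exists a constant C > 0 such that for all real a ≥ 1, the series ∑_{x=1}^{∞} (1 − 1/(a + b·ln x))^x converges and is at most C·a. -/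
/-!
Since `1 - 1/D ≤ exp (-1/D)`, the `x`-th term is at most `exp (-x / D)` with `D = a + b log x`.
If `b log x ≤ a` then `D ≤ 2a`, and these terms are dominated by the geometric series
`∑ exp (-1/(2a))^x ≤ 2a`. Otherwise `D ≤ 2b log x ≤ 4b √x`, so the term is at most
`exp (-√x / (4b)) ≤ 6144 b⁴ / x²`, whose sum is bounded independently of `a`.
-/

open Real

lemma one_sub_one_div_pow_le_exp_neg_div {D : ℝ} (hD : 1 ≤ D) (n : ℕ) :
    (1 - 1 / D) ^ n ≤ exp (-(n / D)) :=
  calc (1 - 1 / D) ^ n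
      ≤ exp (-(1 / D)) ^ n :=
        pow_le_pow_left₀ (sub_nonneg.2 (div_le_one_of_le₀ hD (zero_le_one.trans hD)))
          (by linarith [add_one_le_exp (-(1 / D))]) n
    _ = exp (-(n / D)) := by rw [← exp_nat_mul]; ring_nf

lemma exp_neg_le_div_pow_four {s : ℝ} (hs : 0 < s) : exp (-s) ≤ 24 / s ^ 4 := by
  have h := pow_div_factorial_le_exp _ hs.le 4
  rw [exp_neg, ← inv_div]
  exact inv_anti₀ (by positivity) (by simpa [Nat.factorial] using h)

lemma log_le_two_mul_sqrt {t : ℝ} (ht : 0 ≤ t) : log t ≤ 2 * √t := by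
  have h := log_le_rpow_div ht one_half_pos
  rwa [← sqrt_eq_rpow, div_eq_mul_inv, inv_div, div_one, mul_comm] at h

lemma exp_neg_div_le_of_le_mul_log {c t D : ℝ} (hc : 0 < c) (ht : 0 < t) (hD : 0 < D)
    (hDt : D ≤ c * log t) : exp (-(t / D)) ≤ 384 * c ^ 4 / t ^ 2 := by
  have hsqrt : √t * √t = t := mul_self_sqrt ht.le
  have hst : √t / (2 * c) ≤ t / D := by
    rw [le_div_iff₀ hD]
    calc √t / (2 * c) * D ≤ √t / (2 * c) * (c * (2 * √t)) := by
          gcongr; exact hDt.trans (by gcongr; exact log_le_two_mul_sqrt ht.le)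
      _ = t := by field_simp; linear_combination hsqrt
  calc exp (-(t / D)) ≤ exp (-(√t / (2 * c))) := exp_le_exp.2 (neg_le_neg hst)
    _ ≤ 24 / (√t / (2 * c)) ^ 4 := exp_neg_le_div_pow_four (by positivity)
    _ = 384 * c ^ 4 / t ^ 2 := by
        have hsqrt4 : √t ^ 4 = t ^ 2 := by
          rw [show (4 : ℕ) = 2 * 2 from rfl, pow_mul, sq_sqrt ht.le]
        rw [div_pow, hsqrt4]
        field_simp
        ring

lemma one_sub_one_div_pow_le_geometric_add_inv_sq {a b : ℝ} (ha : 1 ≤ a) (hb : 0 < b)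
    (n : ℕ) :
    (1 - 1 / (a + b * log n)) ^ n ≤ exp (-(1 / (2 * a))) ^ n + 6144 * b ^ 4 / n ^ 2 := by
  have hlog : 0 ≤ log n := log_natCast_nonneg n
  have hD : 1 ≤ a + b * log n := by nlinarith
  refine (one_sub_one_div_pow_le_exp_neg_div hD n).trans ?_
  rcases le_or_gt (b * log n) a with hsmall | hlarge
  · have hexp : exp (-(n / (a + b * log n))) ≤ exp (-(1 / (2 * a))) ^ n := by
      rw [← exp_nat_mul, exp_le_exp, mul_neg, neg_le_neg_iff, mul_one_div]
      gcongr
      linarith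
    exact hexp.trans (le_add_of_nonneg_right (by positivity))
  · have hn : (0 : ℝ) < n := by
      rcases n.eq_zero_or_pos with rfl | hn
      · simp only [Nat.cast_zero, log_zero, mul_zero] at hlarge
        linarith
      · exact_mod_cast hn
    have hexp := exp_neg_div_le_of_le_mul_log (c := 2 * b) (by positivity) hn (by linarith)
      (by linarith : a + b * log n ≤ 2 * b * log n)
    exact (hexp.trans_eq (by ring)).trans (le_add_of_nonneg_left (by positivity))

lemma hasSum_pow_succ_exp_neg {c : ℝ} (hc : 0 < c) :
    HasSum (fun n : ℕ => exp (-c) ^ (n + 1)) (1 / (exp c - 1)) := by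
  have hgeom := (hasSum_geometric_of_lt_one (exp_pos (-c)).le
    (exp_lt_one_iff.2 (neg_lt_zero.2 hc))).mul_left (exp (-c))
  have hexp : exp c - 1 ≠ 0 := (sub_pos.2 (one_lt_exp_iff.2 hc)).ne'
  simp only [← pow_succ'] at hgeom
  rwa [show exp (-c) * (1 - exp (-c))⁻¹ = 1 / (exp c - 1) by rw [exp_neg]; field_simp] at hgeom

lemma hasSum_one_div_succ_sq : HasSum (fun n : ℕ => 1 / ((n : ℝ) + 1) ^ 2) (π ^ 2 / 6) := by
  simpa using (hasSum_nat_add_iff' 1).2 hasSum_zeta_two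

lemma pi_sq_div_six_lt_two : π ^ 2 / 6 < 2 := by
  nlinarith [pi_lt_d2, pi_pos]

/-- For every fixed b > 0 there is a constant C > 0 such that for all a ≥ 1 the series
    ∑_{x=1}^∞ (1 − 1/(a + b ln x))^x converges and its sum is at most C·a. -/
theorem summation_estimate (b : ℝ) (hb : 0 < b) :
    ∃ C : ℝ, 0 < C ∧ ∀ a : ℝ, 1 ≤ a →
      Summable (fun x : ℕ => (1 - 1 / (a + b * Real.log (x + 1))) ^ (x + 1)) ∧
      ∑' x : ℕ, (1 - 1 / (a + b * Real.log (x + 1))) ^ (x + 1) ≤ C * a := by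
  refine ⟨2 + 12288 * b ^ 4, by positivity, fun a ha => ?_⟩
  have hc : 0 < 1 / (2 * a) := by positivity
  have hmajorant :=
    (hasSum_pow_succ_exp_neg hc).add (hasSum_one_div_succ_sq.mul_left (6144 * b ^ 4))
  have hterm : ∀ x : ℕ, (1 - 1 / (a + b * log (x + 1))) ^ (x + 1) ≤
      exp (-(1 / (2 * a))) ^ (x + 1) + 6144 * b ^ 4 * (1 / ((x : ℝ) + 1) ^ 2) := fun x => by
    rw [mul_one_div]
    exact_mod_cast one_sub_one_div_pow_le_geometric_add_inv_sq ha hb (x + 1)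
  have hnonneg (x : ℕ) : 0 ≤ (1 - 1 / (a + b * log (x + 1))) ^ (x + 1) := by
    have hlog : 0 ≤ log ((x : ℝ) + 1) := by exact_mod_cast log_natCast_nonneg (x + 1)
    exact pow_nonneg (sub_nonneg.2 (div_le_one_of_le₀ (by nlinarith) (by nlinarith))) _
  have hsummable := hmajorant.summable.of_nonneg_of_le hnonneg hterm
  refine ⟨hsummable, ?_⟩
  have hgeom : 1 / (exp (1 / (2 * a)) - 1) ≤ 2 * a := by
    refine (one_div_le_one_div_of_le hc ?_).trans_eq (one_div_one_div _)
    linarith [add_one_le_exp (1 / (2 * a))]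
  calc ∑' x : ℕ, (1 - 1 / (a + b * log (x + 1))) ^ (x + 1)
      ≤ 1 / (exp (1 / (2 * a)) - 1) + 6144 * b ^ 4 * (π ^ 2 / 6) :=
        (hsummable.tsum_le_tsum hterm hmajorant.summable).trans_eq hmajorant.tsum_eq
    _ ≤ 2 * a + 6144 * b ^ 4 * 2 := by gcongr; exact pi_sq_div_six_lt_two.le
    _ ≤ (2 + 12288 * b ^ 4) * a := by nlinarith [pow_pos hb 4]
end
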